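/- For any binary phylogenetic X-tree T with |X| ≥ 3 and any internal k-colouring γ of T, the induced set of characters Π(γ) is convex on T and distinguishes T. -/

import Mathlib

open SimpleGraph

/-- A phylogenetic `X`-tree: a finite tree with no degree-two vertices whose
leaves (degree-one vertices) are labelled bijectively by `X`. -/
structure PhyloTree (X : Type) : Type 1 where
  V : Type
  vfin : Finite V
  G : SimpleGraph V
  isTree : G.IsTree
  φ : X → V
  φinj : Function.Injective φ
  leaf_iff : ∀ v : V, (G.neighborSet v).ncard = 1 ↔ v ∈ Set.range φ
  not_two : ∀ v : V, (G.neighborSet v).ncard ≠ 2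

namespace PhyloTree

variable {X : Type}

/-- Internal (non-leaf) vertex. -/
def IsInternal (T : PhyloTree X) (v : T.V) : Prop := v ∉ Set.range T.φ

/-- A binary phylogenetic tree: every internal vertex has degree three. -/
def IsBinary (T : PhyloTree X) : Prop :=
  ∀ v : T.V, T.IsInternal v → (T.G.neighborSet v).ncard = 3

/-- `w` lies on the path between `u` and `v`. -/
def OnPath (T : PhyloTree X) (u v w : T.V) : Prop :=
  ∃ p : T.G.Walk u v, p.IsPath ∧ w ∈ p.support

/-- Vertex set of the minimal subtree spanned by the leaves labelled by `A`. -/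
def span (T : PhyloTree X) (A : Set X) : Set T.V :=
  {v | ∃ a ∈ A, ∃ b ∈ A, T.OnPath (T.φ a) (T.φ b) v}

/-- A character (partition of `X`) is convex on `T` if the spanned subtrees of
distinct parts are vertex disjoint. -/
def ConvexOn (T : PhyloTree X) (χ : Set (Set X)) : Prop :=
  ∀ A ∈ χ, ∀ B ∈ χ, A ≠ B → Disjoint (T.span A) (T.span B)

/-- Isomorphism of phylogenetic `X`-trees fixing the leaf labels. -/
def LabelIso (T T' : PhyloTree X) : Prop :=
  ∃ e : T.G ≃g T'.G, ∀ x : X, e (T.φ x) = T'.φ x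

/-- A set `C` of characters defines `T`: each member is a character convex on `T`,
and any phylogenetic `X`-tree on which `C` is convex is isomorphic to `T`. -/
def Defines (C : Set (Set (Set X))) (T : PhyloTree X) : Prop :=
  (∀ χ ∈ C, Setoid.IsPartition χ) ∧ (∀ χ ∈ C, T.ConvexOn χ) ∧
    ∀ T' : PhyloTree X, (∀ χ ∈ C, T'.ConvexOn χ) → T.LabelIso T'

/-- `T` is defined by some set of at most `n` characters. -/
def DefinedByAtMost (n : ℕ) (T : PhyloTree X) : Prop :=
  ∃ C : Set (Set (Set X)), C.Finite ∧ C.ncard ≤ n ∧ Defines C T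

/-- A cherry: two distinct leaves adjacent to a common vertex. -/
def IsCherry (T : PhyloTree X) (x y : X) : Prop :=
  x ≠ y ∧ ∃ v : T.V, T.G.Adj (T.φ x) v ∧ T.G.Adj (T.φ y) v

/-- An internal edge: an edge both of whose endpoints are internal vertices. -/
def IsInternalEdge (T : PhyloTree X) (u v : T.V) : Prop :=
  T.G.Adj u v ∧ T.IsInternal u ∧ T.IsInternal v

/-- The character `χ` distinguishes the internal edge `{u, v}`. -/
def DistEdge (T : PhyloTree X) (χ : Set (Set X)) (u v : T.V) : Prop :=
  ∃ A ∈ χ, ∃ B ∈ χ, A ≠ B ∧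
    (∃ a ∈ A, ∃ a' ∈ A, a ≠ a' ∧
      T.OnPath (T.φ a) (T.φ a') u ∧ ¬ T.OnPath (T.φ a) (T.φ a') v) ∧
    (∃ b ∈ B, ∃ b' ∈ B, b ≠ b' ∧
      T.OnPath (T.φ b) (T.φ b') v ∧ ¬ T.OnPath (T.φ b) (T.φ b') u)

/-- `C` distinguishes `T`: every internal edge is distinguished by some member of `C`. -/
def Distinguishes (T : PhyloTree X) (C : Set (Set (Set X))) : Prop :=
  ∀ u v : T.V, T.IsInternalEdge u v → ∃ χ ∈ C, T.DistEdge χ u v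

/-- Every internal vertex is adjacent to a leaf. -/
def IsCaterpillar (T : PhyloTree X) : Prop :=
  ∀ v : T.V, T.IsInternal v → ∃ u : T.V, T.G.Adj v u ∧ u ∈ Set.range T.φ

/-- An internal `k`-colouring: a surjective assignment of colours in `Fin k` to the
internal edges of `T` such that adjacent internal edges get different colours. -/
structure InternalColoring (T : PhyloTree X) (k : ℕ) where
  γ : Sym2 T.V → Fin k
  proper : ∀ u v w : T.V, T.IsInternalEdge u v → T.IsInternalEdge v w → u ≠ w →
    γ s(u, v) ≠ γ s(v, w)
  surj : ∀ i : Fin k, ∃ u v : T.V, T.IsInternalEdge u v ∧ γ s(u, v) = i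

/-- The graph obtained from `T` by deleting all internal edges of colour `i`. -/
def delGraph (T : PhyloTree X) {k : ℕ} (c : T.InternalColoring k) (i : Fin k) :
    SimpleGraph T.V :=
  T.G.deleteEdges {e | c.γ e = i ∧ ∃ u v : T.V, e = s(u, v) ∧ T.IsInternalEdge u v}

/-- The character `π(γ, i)` induced by colour `i`: the partition of `X` given by the
connected components after deleting the internal edges of colour `i`. -/
def colorChar (T : PhyloTree X) {k : ℕ} (c : T.InternalColoring k) (i : Fin k) :
    Set (Set X) :=
  {P | ∃ x : X, P = {y : X | (T.delGraph c i).Reachable (T.φ x) (T.φ y)}}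

/-- The set `Π(γ)` of characters induced by an internal colouring. -/
def charSet (T : PhyloTree X) {k : ℕ} (c : T.InternalColoring k) : Set (Set (Set X)) :=
  Set.range (T.colorChar c)

/-- `T` is defined by the internal colouring `c`. -/
def DefinedByColoring (T : PhyloTree X) {k : ℕ} (c : T.InternalColoring k) : Prop :=
  Defines (T.charSet c) T

end PhyloTree

section Aux
open Walk

variable {V : Type*} {G H : SimpleGraph V}

lemma Walk.getVert_transfer' {u v : V} (p : G.Walk u v)
    (h : ∀ e ∈ p.edges, e ∈ H.edgeSet) (n : ℕ) :
    (p.transfer H h).getVert n = p.getVert n := by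
  induction p generalizing n with
  | nil => rfl
  | cons h' p ih =>
    cases n with
    | zero => rfl
    | succ n => simp only [Walk.transfer, getVert_cons_succ, ih]; exact ih _ n

lemma getVert_one_takeUntil' [DecidableEq V] {u z w : V} (p : G.Walk u z)
    (hw : w ∈ p.support) (hne : w ≠ u) :
    (p.takeUntil w hw).getVert 1 = p.getVert 1 := by
  conv_rhs => rw [← p.take_spec hw]
  rw [getVert_append]
  have ht : (p.takeUntil w hw).length ≠ 0 := by
    intro h0
    exact hne (Walk.eq_of_length_eq_zero h0).symm
  by_cases h1 : 1 < (p.takeUntil w hw).length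
  · simp [h1]
  · have hl : (p.takeUntil w hw).length = 1 := by omega
    simp [h1, hl, getVert_zero]
    have := (p.takeUntil w hw).getVert_length
    rw [hl] at this
    exact this
end Aux

namespace PhyloTree

variable {X : Type} (T : PhyloTree X) {k : ℕ} (c : T.InternalColoring k) (i : Fin k)

lemma path_unique {a b : T.V} {p q : T.G.Walk a b} (hp : p.IsPath) (hq : q.IsPath) : p = q :=
  (T.isTree.existsUnique_path a b).unique hp hq

lemma internalEdge_symm {u v : T.V} (h : T.IsInternalEdge u v) : T.IsInternalEdge v u :=
  ⟨h.1.symm, h.2.2, h.2.1⟩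

lemma delGraph_adj {u v : T.V} : (T.delGraph c i).Adj u v ↔
    T.G.Adj u v ∧ ¬(c.γ s(u,v) = i ∧ T.IsInternalEdge u v) := by
  rw [delGraph, SimpleGraph.deleteEdges_adj]
  refine and_congr_right fun hadj => not_congr ?_
  constructor
  · rintro ⟨h1, a, b, hab, hint⟩
    refine ⟨h1, ?_⟩
    rw [Sym2.eq_iff] at hab
    rcases hab with ⟨rfl, rfl⟩ | ⟨rfl, rfl⟩
    · exact hint
    · exact T.internalEdge_symm hint
  · rintro ⟨h1, h2⟩; exact ⟨h1, u, v, rfl, h2⟩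

lemma delGraph_le : T.delGraph c i ≤ T.G := SimpleGraph.deleteEdges_le _

lemma delWalk_edges {a b : T.V} (p : (T.delGraph c i).Walk a b) :
    ∀ e ∈ p.edges, e ∈ T.G.edgeSet :=
  fun e he => SimpleGraph.edgeSet_mono (T.delGraph_le c i) (p.edges_subset_edgeSet he)

/-- if the internal edge `{u,v}` has colour `i` then `u` and `v` are not
reachable in the deleted graph. -/
lemma not_reach {u v : T.V} (hint : T.IsInternalEdge u v) (hi : c.γ s(u,v) = i) :
    ¬ (T.delGraph c i).Reachable u v := by
  rintro ⟨r⟩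
  classical
  have hne : u ≠ v := hint.1.ne
  set q : (T.delGraph c i).Walk u v := r.toPath.1 with hq
  have hqp : q.IsPath := r.toPath.2
  have hqt : (q.transfer T.G (T.delWalk_edges c i q)).IsPath := hqp.transfer _
  have hsingle : (Walk.cons hint.1 Walk.nil : T.G.Walk u v).IsPath := by
    simp [Walk.isPath_def, hne]
  have heq := T.path_unique hqt hsingle
  have hedges : q.edges = [s(u,v)] := by
    have := congrArg Walk.edges heq
    rwa [Walk.edges_transfer] at this
  have hmem : s(u,v) ∈ (T.delGraph c i).edgeSet :=
    q.edges_subset_edgeSet (by rw [hedges]; exact List.mem_singleton_self _)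
  rw [SimpleGraph.mem_edgeSet, T.delGraph_adj c i] at hmem
  exact hmem.2 ⟨hi, hint⟩

/-- reachability spreads along tree paths. -/
lemma reach_of_onPath {a b w : T.V} (hr : (T.delGraph c i).Reachable a b)
    {p : T.G.Walk a b} (hp : p.IsPath) (hw : w ∈ p.support) :
    (T.delGraph c i).Reachable a w := by
  classical
  obtain ⟨r⟩ := hr
  set q : (T.delGraph c i).Walk a b := r.toPath.1 with hqdef
  have hqp : q.IsPath := r.toPath.2
  have heq := T.path_unique (hqp.transfer (T.delWalk_edges c i q)) hp
  have hw' : w ∈ q.support := by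
    have := congrArg Walk.support heq
    rw [Walk.support_transfer] at this
    rw [← this] at hw
    exact hw
  exact ⟨q.takeUntil w hw'⟩

end PhyloTree

namespace PhyloTree
open Walk
variable {X : Type} (T : PhyloTree X) {k : ℕ} (c : T.InternalColoring k) (i : Fin k)

/-- at an internal vertex, at most one incident edge is deleted, so we can
always step to a neighbour avoiding any prescribed vertex. -/
lemma exists_other_nbr (hbin : T.IsBinary) {z : T.V} (hz : T.IsInternal z) (prev : T.V) :
    ∃ z', (T.delGraph c i).Adj z z' ∧ z' ≠ prev := by
  by_contra hcon
  push_neg at hcon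
  set D : Set T.V := {w | T.G.Adj z w ∧ c.γ s(z,w) = i ∧ T.IsInternalEdge z w} with hD
  have hDsub : D.Subsingleton := by
    rintro w1 ⟨ha1, hc1, hi1⟩ w2 ⟨ha2, hc2, hi2⟩
    by_contra hne
    have := c.proper w1 z w2 (T.internalEdge_symm hi1) hi2 hne
    rw [Sym2.eq_swap] at hc1
    exact this (hc1.trans hc2.symm)
  have hsub : T.G.neighborSet z ⊆ insert prev D := by
    intro w hw
    by_cases hwD : w ∈ D
    · exact Set.mem_insert_of_mem _ hwD
    · have : (T.delGraph c i).Adj z w := by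
        rw [T.delGraph_adj c i]
        refine ⟨hw, fun hh => hwD ⟨hw, hh.1, hh.2⟩⟩
      exact Set.mem_insert_iff.mpr (Or.inl (hcon w this))
  have hfin : D.Finite := by
    have := T.vfin
    exact Set.toFinite D
  have hD1 : D.ncard ≤ 1 := by
    rcases hDsub.eq_empty_or_singleton with h | ⟨a, h⟩ <;> simp [h]
  have h3 : (T.G.neighborSet z).ncard = 3 := hbin z hz
  have := Set.ncard_le_ncard hsub (by have := T.vfin; exact Set.toFinite _)
  have hins := Set.ncard_insert_le prev D
  omega

/-- From any nontrivial path in the deleted graph one can reach a leaf,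
keeping the same first step. -/
lemma exists_leaf_path (hbin : T.IsBinary) {u : T.V} :
    ∀ (n : ℕ) (z : T.V) (p : (T.delGraph c i).Walk u z), p.IsPath → p.length ≠ 0 →
      (Nat.card T.V - p.length = n) →
      ∃ (x : X) (q : (T.delGraph c i).Walk u (T.φ x)), q.IsPath ∧ q.length ≠ 0 ∧
        q.getVert 1 = p.getVert 1 := by
  classical
  have := T.vfin
  have : Fintype T.V := Fintype.ofFinite _
  intro n
  induction n using Nat.strong_induction_on with
  | _ n ih =>
    intro z p hp hl hn
    by_cases hz : z ∈ Set.range T.φ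
    · obtain ⟨x, hx⟩ := hz
      subst hx
      exact ⟨x, p, hp, hl, rfl⟩
    · -- z is internal; extend the path
      obtain ⟨z', hadj, hne⟩ := T.exists_other_nbr c i hbin hz (p.getVert (p.length - 1))
      have hz'notmem : z' ∉ p.support := by
        intro hmem
        have hzz' : z' ≠ z := hadj.ne'
        set t := p.takeUntil z' hmem with htdef
        have ht : t.IsPath := hp.takeUntil hmem
        have hznt : z ∉ t.support := by
          intro hzt
          have hspec := p.take_spec hmem
          have hnodup := hp.support_nodup
          rw [← hspec, Walk.support_append] at hnodup
          have hz2 : z ∈ (p.dropUntil z' hmem).support.tail := by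
            have hzd : z ∈ (p.dropUntil z' hmem).support := Walk.end_mem_support _
            rw [(p.dropUntil z' hmem).support_eq_cons, List.mem_cons] at hzd
            rcases hzd with h | h
            · exact absurd h.symm hzz'
            · exact h
          exact (List.disjoint_of_nodup_append hnodup) hzt hz2
        set t' := t.concat hadj.symm with ht'def
        have ht'p : t'.IsPath := by
          rw [Walk.isPath_def, ht'def, Walk.support_concat,
            List.nodup_append']
          exact ⟨ht.support_nodup, List.nodup_singleton z,
            by intro a ha hb; rw [List.mem_singleton] at hb; subst hb; exact hznt ha⟩
        have heq := T.path_unique (hp.transfer (T.delWalk_edges c i p))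
          (ht'p.transfer (T.delWalk_edges c i t'))
        have hlen : p.length = t.length + 1 := by
          have := congrArg Walk.length heq
          rwa [Walk.length_transfer, Walk.length_transfer, ht'def, Walk.length_concat] at this
        have hgv := congrArg (fun w => w.getVert (p.length - 1)) heq
        simp only [Walk.getVert_transfer'] at hgv
        have ht'gv : t'.getVert (p.length - 1) = z' := by
          rw [ht'def, Walk.concat, Walk.getVert_append]
          have : ¬ (p.length - 1 < t.length) := by omega
          rw [if_neg this]
          have : p.length - 1 - t.length = 0 := by omega
          rw [this, Walk.getVert_zero]
        rw [ht'gv] at hgv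
        exact hne hgv.symm
      set q := p.concat hadj with hqdef
      have hqp : q.IsPath := by
        rw [Walk.isPath_def, hqdef, Walk.support_concat,
          List.nodup_append']
        exact ⟨hp.support_nodup, List.nodup_singleton z',
          by intro a ha hb; rw [List.mem_singleton] at hb; subst hb; exact hz'notmem ha⟩
      have hqlen : q.length = p.length + 1 := Walk.length_concat _ _
      have hcard : q.length < Fintype.card T.V := hqp.length_lt
      have hcard' : Fintype.card T.V = Nat.card T.V := by
        rw [Nat.card_eq_fintype_card]
      have hlt : Nat.card T.V - q.length < n := by omega
      have hgv1 : q.getVert 1 = p.getVert 1 := by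
        rw [hqdef, Walk.concat, Walk.getVert_append]
        by_cases h1 : 1 < p.length
        · rw [if_pos h1]
        · have hpl : p.length = 1 := by omega
          rw [if_neg h1]
          have : 1 - p.length = 0 := by omega
          rw [this, Walk.getVert_zero]
          have := p.getVert_length
          rw [hpl] at this
          exact this.symm
      obtain ⟨x, q', hq'p, hq'l, hq'gv⟩ := ih _ hlt z' q hqp (by omega) rfl
      exact ⟨x, q', hq'p, hq'l, hq'gv.trans hgv1⟩

end PhyloTree

namespace PhyloTree
open Walk
variable {X : Type} (T : PhyloTree X) {k : ℕ} (c : T.InternalColoring k) (i : Fin k)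

lemma side_pair {u v : T.V} (hnr : ¬ (T.delGraph c i).Reachable u v)
    {u1 u2 : T.V} (h12 : u1 ≠ u2) {a a' : X}
    (qa : (T.delGraph c i).Walk u (T.φ a)) (qa' : (T.delGraph c i).Walk u (T.φ a'))
    (hqa : qa.IsPath) (hqa' : qa'.IsPath)
    (h1 : qa.getVert 1 = u1) (h2 : qa'.getVert 1 = u2) :
    a ≠ a' ∧ T.OnPath (T.φ a) (T.φ a') u ∧ ¬ T.OnPath (T.φ a) (T.φ a') v := by
  classical
  set Pa := qa.transfer T.G (T.delWalk_edges c i qa) with hPadef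
  set Pa' := qa'.transfer T.G (T.delWalk_edges c i qa') with hPa'def
  have hPa : Pa.IsPath := hqa.transfer _
  have hPa' : Pa'.IsPath := hqa'.transfer _
  have hgva : Pa.getVert 1 = u1 := by rw [hPadef, Walk.getVert_transfer', h1]
  have hgva' : Pa'.getVert 1 = u2 := by rw [hPa'def, Walk.getVert_transfer', h2]
  have hane : a ≠ a' := by
    intro h
    subst h
    have := T.path_unique hPa hPa'
    rw [this, hgva'] at hgva
    exact h12 hgva.symm
  have hva : v ∉ Pa.support := by
    rw [hPadef, Walk.support_transfer]
    intro hv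
    exact hnr ⟨qa.takeUntil v hv⟩
  have hva' : v ∉ Pa'.support := by
    rw [hPa'def, Walk.support_transfer]
    intro hv
    exact hnr ⟨qa'.takeUntil v hv⟩
  have hmeet : ∀ w, w ∈ Pa.support → w ∈ Pa'.support → w = u := by
    intro w hw1 hw2
    by_contra hwne
    have ht1 := hPa.takeUntil hw1
    have ht2 := hPa'.takeUntil hw2
    have heq := T.path_unique ht1 ht2
    have hg1 := getVert_one_takeUntil' Pa hw1 hwne
    have hg2 := getVert_one_takeUntil' Pa' hw2 hwne
    rw [heq, hg2, hgva'] at hg1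
    rw [hgva] at hg1
    exact h12 hg1.symm
  set W := Pa.reverse.append Pa' with hWdef
  have hWsup : W.support = Pa.reverse.support ++ Pa'.support.tail :=
    Walk.support_append _ _
  have hutail : u ∉ Pa'.support.tail := by
    intro hu
    have := hPa'.support_nodup
    rw [Pa'.support_eq_cons] at this
    exact (List.nodup_cons.mp this).1 hu
  have hWpath : W.IsPath := by
    rw [Walk.isPath_def, hWsup, List.nodup_append']
    refine ⟨?_, ?_, ?_⟩
    · rw [Walk.support_reverse, List.nodup_reverse]
      exact hPa.support_nodup
    · exact hPa'.support_nodup.tail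
    · intro x hx1 hx2
      rw [Walk.support_reverse, List.mem_reverse] at hx1
      have hx2' : x ∈ Pa'.support := List.mem_of_mem_tail hx2
      have := hmeet x hx1 hx2'
      subst this
      exact hutail hx2
  have humem : u ∈ W.support := by
    rw [hWsup]
    exact List.mem_append_left _ (Walk.end_mem_support _)
  refine ⟨hane, ⟨W, hWpath, humem⟩, ?_⟩
  rintro ⟨r, hr, hvr⟩
  rw [T.path_unique hr hWpath, hWsup, List.mem_append] at hvr
  rcases hvr with h | h
  · rw [Walk.support_reverse, List.mem_reverse] at h
    exact hva h
  · exact hva' (List.mem_of_mem_tail h)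

end PhyloTree

/-- the set of characters induced by an internal `k`-colouring is convex
on `T` and distinguishes `T`. -/
theorem coloring_convex_and_distinguishes {X : Type} (T : PhyloTree X)
    (hbin : T.IsBinary) (hX : 3 ≤ Nat.card X)
    (k : ℕ) (c : T.InternalColoring k) :
    (∀ χ ∈ T.charSet c, T.ConvexOn χ) ∧ T.Distinguishes (T.charSet c) := by
  classical
  have hfin := T.vfin
  constructor
  · -- convexity
    rintro χ ⟨i, rfl⟩ A hA B hB hAB
    obtain ⟨x, rfl⟩ := hA
    obtain ⟨x', rfl⟩ := hB
    rw [Set.disjoint_left]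
    rintro w ⟨a, ha, b, hb, pa, hpa, hwa⟩ ⟨a', ha', b', hb', pb, hpb, hwb⟩
    apply hAB
    have ha : (T.delGraph c i).Reachable (T.φ x) (T.φ a) := ha
    have hb : (T.delGraph c i).Reachable (T.φ x) (T.φ b) := hb
    have ha' : (T.delGraph c i).Reachable (T.φ x') (T.φ a') := ha'
    have hb' : (T.delGraph c i).Reachable (T.φ x') (T.φ b') := hb'
    have hwx : (T.delGraph c i).Reachable (T.φ x) w :=
      ha.trans (T.reach_of_onPath c i (ha.symm.trans hb) hpa hwa)
    have hwx' : (T.delGraph c i).Reachable (T.φ x') w :=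
      ha'.trans (T.reach_of_onPath c i (ha'.symm.trans hb') hpb hwb)
    have hxx' : (T.delGraph c i).Reachable (T.φ x) (T.φ x') := hwx.trans hwx'.symm
    ext y
    simp only [Set.mem_setOf_eq]
    exact ⟨fun h => hxx'.symm.trans h, fun h => hxx'.trans h⟩
  · -- distinguishing
    rintro u v huv
    set i := c.γ s(u, v) with hidef
    refine ⟨T.colorChar c i, ⟨i, rfl⟩, ?_⟩
    have hnr : ¬ (T.delGraph c i).Reachable u v := T.not_reach c i huv rfl
    have hnr' : ¬ (T.delGraph c i).Reachable v u := fun h => hnr h.symm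
    -- produce, for each endpoint, two leaf-paths through its two other neighbours
    have hstep : ∀ z w : T.V, T.IsInternal z → (T.delGraph c i).Adj z w →
        ∃ (x : X) (q : (T.delGraph c i).Walk z (T.φ x)),
          q.IsPath ∧ q.getVert 1 = w := by
      intro z w hz hw
      have hp : (Walk.cons hw Walk.nil).IsPath := by simp [Walk.isPath_def, hw.ne]
      obtain ⟨x, q, hq1, hq2, hq3⟩ :=
        T.exists_leaf_path c i hbin _ w (Walk.cons hw Walk.nil) hp (by simp) rfl
      exact ⟨x, q, hq1, by rw [hq3]; rfl⟩
    -- adjacency in the deleted graph for the other neighbours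
    have hadjH : ∀ z z' w : T.V, T.IsInternalEdge z z' → c.γ s(z, z') = i →
        T.G.Adj z w → w ≠ z' → (T.delGraph c i).Adj z w := by
      intro z z' w hzz' hcol hw hwz'
      rw [T.delGraph_adj c i]
      refine ⟨hw, fun hh => ?_⟩
      have hp := c.proper z' z w (T.internalEdge_symm hzz') hh.2 (fun h => hwz' h.symm)
      apply hp
      have : c.γ s(z', z) = c.γ s(z, z') := by rw [Sym2.eq_swap]
      rw [this, hcol, hh.1]
    -- the two other neighbours of an endpoint
    have hnbrs : ∀ z z' : T.V, T.IsInternalEdge z z' →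
        ∃ w1 w2 : T.V, w1 ≠ w2 ∧ T.G.Adj z w1 ∧ T.G.Adj z w2 ∧ w1 ≠ z' ∧ w2 ≠ z' := by
      intro z z' hzz'
      have h3 : (T.G.neighborSet z).ncard = 3 := hbin z hzz'.2.1
      have hmem : z' ∈ T.G.neighborSet z := hzz'.1
      have h2 : ((T.G.neighborSet z) \ {z'}).ncard = 2 := by
        rw [Set.ncard_diff_singleton_of_mem hmem, h3]
      obtain ⟨w1, w2, hw12, hS⟩ := Set.ncard_eq_two.mp h2
      have hw1 : w1 ∈ T.G.neighborSet z \ {z'} := by rw [hS]; exact Set.mem_insert _ _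
      have hw2 : w2 ∈ T.G.neighborSet z \ {z'} := by
        rw [hS]; exact Set.mem_insert_of_mem _ rfl
      exact ⟨w1, w2, hw12, hw1.1, hw2.1, hw1.2, hw2.2⟩
    -- u-side
    obtain ⟨u1, u2, hu12, hau1, hau2, hu1v, hu2v⟩ := hnbrs u v huv
    obtain ⟨a, qa, hqa, hgva⟩ := hstep u u1 huv.2.1
      (hadjH u v u1 huv rfl hau1 hu1v)
    obtain ⟨a', qa', hqa', hgva'⟩ := hstep u u2 huv.2.1
      (hadjH u v u2 huv rfl hau2 hu2v)
    -- v-side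
    have hvu : T.IsInternalEdge v u := T.internalEdge_symm huv
    have hcolvu : c.γ s(v, u) = i := by rw [hidef]; rw [Sym2.eq_swap]
    obtain ⟨v1, v2, hv12, hbv1, hbv2, hv1u, hv2u⟩ := hnbrs v u hvu
    obtain ⟨b, qb, hqb, hgvb⟩ := hstep v v1 hvu.2.1
      (hadjH v u v1 hvu hcolvu hbv1 hv1u)
    obtain ⟨b', qb', hqb', hgvb'⟩ := hstep v v2 hvu.2.1
      (hadjH v u v2 hvu hcolvu hbv2 hv2u)
    obtain ⟨hane, honA, hnotA⟩ :=
      T.side_pair c i hnr hu12 qa qa' hqa hqa' hgva hgva'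
    obtain ⟨hbne, honB, hnotB⟩ :=
      T.side_pair c i hnr' hv12 qb qb' hqb hqb' hgvb hgvb'
    refine ⟨{y | (T.delGraph c i).Reachable (T.φ a) (T.φ y)}, ⟨a, rfl⟩,
      {y | (T.delGraph c i).Reachable (T.φ b) (T.φ y)}, ⟨b, rfl⟩, ?_,
      ⟨a, Reachable.refl _, a', ⟨qa.reverse.append qa'⟩, hane, honA, hnotA⟩,
      ⟨b, Reachable.refl _, b', ⟨qb.reverse.append qb'⟩, hbne, honB, hnotB⟩⟩
    intro hABeq
    have hb : (T.delGraph c i).Reachable (T.φ a) (T.φ b) := by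
      have : (T.φ b) ∈ {w : T.V | True} := trivial
      have hbB : b ∈ {y | (T.delGraph c i).Reachable (T.φ b) (T.φ y)} :=
        Reachable.refl _
      rw [← hABeq] at hbB
      exact hbB
    exact hnr (Reachable.trans ⟨qa⟩ (hb.trans (Reachable.symm ⟨qb⟩)))
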